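/- arXiv:1705.00693 — 6 statements merged into one kernel-verified Lean document; each statement's English description precedes it below -/
import Mathlib

section
/- The cut rule is admissible in the cut-free fragment of the equational calculus EQ_N: if Γ ⇒ F and Λ ⇒ G are derivable in cf.EQ_N and F occurs in Λ (more generally if Λ♯F ⇒ G is derivable), then Γ together with Λ-with-F-removed ⇒ G is derivable in cf.EQ_N. -/
inductive Tm : Type
  | var : Nat → Tm
  | const : Nat → Tm
  | app : Nat → Tm → Tm

def Tm.subst (v : Nat) (r : Tm) : Tm → Tm
  | .var w => if w = v then r else .var w
  | .const c => .const c
  | .app f t => .app f (Tm.subst v r t)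

def Tm.count (v : Nat) : Tm → Nat
  | .var w => if w = v then 1 else 0
  | .const _ => 0
  | .app _ t => t.count v

inductive Fml : Type
  | eq : Tm → Tm → Fml
  | atom : Nat → Tm → Fml
  | imp : Fml → Fml → Fml
  | and : Fml → Fml → Fml
  | or : Fml → Fml → Fml
  | neg : Fml → Fml
  | all : Nat → Fml → Fml
  | ex : Nat → Fml → Fml

def Fml.subst (v : Nat) (r : Tm) : Fml → Fml
  | .eq t u => .eq (Tm.subst v r t) (Tm.subst v r u)
  | .atom p t => .atom p (Tm.subst v r t)
  | .imp A B => .imp (Fml.subst v r A) (Fml.subst v r B)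
  | .and A B => .and (Fml.subst v r A) (Fml.subst v r B)
  | .or A B => .or (Fml.subst v r A) (Fml.subst v r B)
  | .neg A => .neg (Fml.subst v r A)
  | .all x A => .all x (if x = v then A else Fml.subst v r A)
  | .ex x A => .ex x (if x = v then A else Fml.subst v r A)

def Fml.count (v : Nat) : Fml → Nat
  | .eq t u => t.count v + u.count v
  | .atom _ t => t.count v
  | .imp A B => A.count v + B.count v
  | .and A B => A.count v + B.count v
  | .or A B => A.count v + B.count v
  | .neg A => A.count v
  | .all x A => if x = v then 0 else A.count v
  | .ex x A => if x = v then 0 else A.count v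

/-- Tags for the equality rules of the equational sequent calculi. -/
inductive EqRule | r1 | r2 | l1 | l2 | cng
  deriving DecidableEq

/-- Derivability in the equational sequent calculus.  Sequents have the form
`Γ ⇒ F` with `Γ : List Fml` and `F : Fml`.  The calculus has logical axioms
`F ⇒ F`, reflexivity axioms `⇒ t = t`, the weak left structural rules
(weakening, exchange, contraction), the cut rule (enabled when `cut = true`),
and the equality rules `=₁`, `=₂`, `=₁ˡ`, `=₂ˡ` and `CNG`, each guarded by the
side condition `ok tag F v r s` (where `F` is the changing formula, `v` the
substituted variable and `r`, `s` the terms involved). -/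
inductive Der (ok : EqRule → Fml → Nat → Tm → Tm → Prop) (cut : Bool) :
    List Fml → Fml → Prop
  | ax (F : Fml) : Der ok cut [F] F
  | refl (t : Tm) : Der ok cut [] (.eq t t)
  | wk {Γ H} (F) : Der ok cut Γ H → Der ok cut (F :: Γ) H
  | exch {Γ₁ Γ₂ F G H} : Der ok cut (Γ₁ ++ F :: G :: Γ₂) H →
      Der ok cut (Γ₁ ++ G :: F :: Γ₂) H
  | contr {Γ F H} : Der ok cut (F :: F :: Γ) H → Der ok cut (F :: Γ) H
  | cutr {Γ Λ F H} : cut = true → Der ok cut Γ F → Der ok cut (F :: Λ) H →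
      Der ok cut (Γ ++ Λ) H
  | eq1 {Γ F v r s} : ok .r1 F v r s → Der ok cut Γ (F.subst v r) →
      Der ok cut (.eq r s :: Γ) (F.subst v s)
  | eq2 {Γ F v r s} : ok .r2 F v r s → Der ok cut Γ (F.subst v r) →
      Der ok cut (.eq s r :: Γ) (F.subst v s)
  | eq1l {Γ F v r s H} : ok .l1 F v r s → Der ok cut (F.subst v r :: Γ) H →
      Der ok cut (F.subst v s :: .eq r s :: Γ) H
  | eq2l {Γ F v r s H} : ok .l2 F v r s → Der ok cut (F.subst v r :: Γ) H →
      Der ok cut (F.subst v s :: .eq s r :: Γ) H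
  | cng {Γ Λ F v r s} : ok .cng F v r s → Der ok cut Γ (F.subst v r) →
      Der ok cut Λ (.eq r s) → Der ok cut (Γ ++ Λ) (F.subst v s)

/-- The side condition allowing exactly the equality rules in `tags`,
with no further restriction. -/
def allow (tags : List EqRule) : EqRule → Fml → Nat → Tm → Tm → Prop :=
  fun t _ _ _ _ => t ∈ tags

/-- `Sharp F Λ Λ'` means `Λ'` is of the form `Λ♯F`: deleting some (possibly
zero) occurrences of `F` from `Λ'` yields `Λ`. -/
inductive Sharp (F : Fml) : List Fml → List Fml → Prop
  | nil : Sharp F [] []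
  | cons {Λ Λ'} (G) : Sharp F Λ Λ' → Sharp F (G :: Λ) (G :: Λ')
  | extra {Λ Λ'} : Sharp F Λ Λ' → Sharp F Λ (F :: Λ')

theorem Der.perm {ok c} {Γ Γ' : List Fml} {H} (h : Der ok c Γ H) (p : Γ.Perm Γ') :
    Der ok c Γ' H := by
  have key : ∀ (l₁ l₂ : List Fml), l₁.Perm l₂ →
      ∀ Δ, Der ok c (Δ ++ l₁) H → Der ok c (Δ ++ l₂) H := by
    intro l₁ l₂ p
    induction p with
    | nil => exact fun Δ d => d
    | cons x p ih =>
        intro Δ d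
        have := ih (Δ ++ [x]) (by simpa using d)
        simpa using this
    | swap x y l => intro Δ d; exact Der.exch d
    | trans p q ih1 ih2 => intro Δ d; exact ih2 Δ (ih1 Δ d)
  simpa using key Γ Γ' p [] (by simpa using h)

theorem Der.wkApp {ok c H Γ} (Δ : List Fml) (h : Der ok c Γ H) :
    Der ok c (Δ ++ Γ) H := by
  induction Δ with
  | nil => exact h
  | cons x Δ ih => exact ih.wk x

theorem Der.contrApp {ok c H} (Δ : List Fml) :
    ∀ Γ, Der ok c (Δ ++ (Δ ++ Γ)) H → Der ok c (Δ ++ Γ) H := by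
  induction Δ with
  | nil => exact fun Γ d => d
  | cons x Δ ih =>
      intro Γ d
      have p1 : (x :: Δ ++ (x :: Δ ++ Γ)).Perm (x :: x :: (Δ ++ (Δ ++ Γ))) :=
        List.Perm.cons x (List.perm_middle (a := x) (l₁ := Δ) (l₂ := Δ ++ Γ))
      have d2 : Der ok c (x :: (Δ ++ (Δ ++ Γ))) H := (Der.perm d p1).contr
      have p2 : (x :: (Δ ++ (Δ ++ Γ))).Perm (Δ ++ (Δ ++ (x :: Γ))) := by
        have h2 : (x :: (Δ ++ Γ)).Perm (Δ ++ (x :: Γ)) := List.perm_middle.symm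
        exact (List.perm_middle.symm).trans (List.Perm.append_left Δ h2)
      have d3 := ih (x :: Γ) (d2.perm p2)
      exact d3.perm List.perm_middle

theorem Sharp.nil_inv {F : Fml} {Λ} (h : Sharp F Λ []) : Λ = [] := by
  cases h; rfl

theorem Sharp.app {F : Fml} {a b c d : List Fml}
    (h1 : Sharp F a b) (h2 : Sharp F c d) : Sharp F (a ++ c) (b ++ d) := by
  induction h1 with
  | nil => exact h2
  | cons G _ ih => exact .cons G ih
  | extra _ ih => exact .extra ih

theorem Sharp.split {F : Fml} :
    ∀ (A : List Fml) {Λ} (B : List Fml), Sharp F Λ (A ++ B) →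
      ∃ Λ₁ Λ₂, Λ = Λ₁ ++ Λ₂ ∧ Sharp F Λ₁ A ∧ Sharp F Λ₂ B := by
  intro A
  induction A with
  | nil => exact fun {Λ} B h => ⟨[], Λ, rfl, .nil, h⟩
  | cons x A ih =>
      intro Λ B h
      cases h with
      | cons _ h' =>
          obtain ⟨Λ₁, Λ₂, rfl, s1, s2⟩ := ih _ h'
          exact ⟨x :: Λ₁, Λ₂, rfl, .cons x s1, s2⟩
      | extra h' =>
          obtain ⟨Λ₁, Λ₂, rfl, s1, s2⟩ := ih _ h'
          exact ⟨Λ₁, Λ₂, rfl, .extra s1, s2⟩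

/-- The cut rule is admissible in `cf.EQ_N` (the cut-free calculus with `CNG`):
if `Γ ⇒ F` and `Λ♯F ⇒ G` are derivable in `cf.EQ_N`, then so is
`Γ, Λ ⇒ G`. -/
theorem cut_admissible_cfEQN (Γ Λ Λ' : List Fml) (F G : Fml)
    (h1 : Der (allow [.cng]) false Γ F)
    (hs : Sharp F Λ Λ')
    (h2 : Der (allow [.cng]) false Λ' G) :
    Der (allow [.cng]) false (Γ ++ Λ) G := by
  induction h2 generalizing Λ with
  | ax F0 =>
      cases hs with
      | cons _ h' =>
          cases h'.nil_inv
          exact Der.wkApp Γ (Der.ax F0)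
      | extra h' =>
          cases h'.nil_inv
          simpa using h1
  | refl t =>
      cases hs.nil_inv
      exact Der.wkApp Γ (Der.refl t)
  | wk F0 _ ih =>
      cases hs with
      | cons _ h' =>
          have d := (ih _ h').wk F0
          exact d.perm List.perm_middle.symm
      | extra h' => exact ih _ h'
  | exch d ih =>
      rename_i Γ₁ Γ₂ A B H0
      obtain ⟨Λ₁, Λm, rfl, s1, sm⟩ := Sharp.split Γ₁ _ hs
      cases sm with
      | cons _ sm' =>
          cases sm' with
          | cons _ s2 =>
              rename_i Λ₂
              have d1 := ih _ (s1.app (.cons A (.cons B s2)))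
              have d2 : Der (allow [.cng]) false ((Γ ++ Λ₁) ++ A :: B :: Λ₂) H0 := by
                simpa [List.append_assoc] using d1
              have d3 := d2.exch
              simpa [List.append_assoc] using d3
          | extra s2 =>
              exact ih _ (s1.app (.extra (.cons B s2)))
      | extra sm' =>
          cases sm' with
          | cons _ s2 =>
              exact ih _ (s1.app (.cons A (.extra s2)))
          | extra s2 =>
              exact ih _ (s1.app (.extra (.extra s2)))
  | contr d ih =>
      rename_i Γ0 F0 H0
      cases hs with
      | cons _ h' =>
          rename_i Λ₀
          have d1 := ih _ (Sharp.cons F0 (Sharp.cons F0 h'))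
          have p1 : (Γ ++ F0 :: F0 :: Λ₀).Perm (F0 :: F0 :: (Γ ++ Λ₀)) :=
            List.perm_middle.trans (List.Perm.cons F0 List.perm_middle)
          have d2 := (d1.perm p1).contr
          exact d2.perm List.perm_middle.symm
      | extra h' => exact ih _ (Sharp.extra (Sharp.extra h'))
  | cutr hc _ _ _ _ => exact absurd hc (by simp)
  | eq1 hok _ _ => simp [allow] at hok
  | eq2 hok _ _ => simp [allow] at hok
  | eq1l hok _ _ => simp [allow] at hok
  | eq2l hok _ _ => simp [allow] at hok
  | cng hok d1 d2 ih1 ih2 =>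
      rename_i Γ0 Λ0 F0 v r s
      obtain ⟨Λ₁, Λ₂, rfl, sA, sB⟩ := Sharp.split Γ0 _ hs
      have e1 := ih1 _ sA
      have e2 := ih2 _ sB
      have d3 : Der (allow [.cng]) false ((Γ ++ Λ₁) ++ (Γ ++ Λ₂)) (F0.subst v s) :=
        Der.cng hok e1 e2
      have b1 : (Λ₁ ++ (Γ ++ Λ₂)).Perm (Γ ++ (Λ₁ ++ Λ₂)) := by
        have := List.Perm.append_right Λ₂ (List.perm_append_comm (l₁ := Λ₁) (l₂ := Γ))
        simpa [List.append_assoc] using this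
      have p : ((Γ ++ Λ₁) ++ (Γ ++ Λ₂)).Perm (Γ ++ (Γ ++ (Λ₁ ++ Λ₂))) := by
        rw [List.append_assoc]
        exact List.Perm.append_left Γ b1
      exact Der.contrApp Γ (Λ₁ ++ Λ₂) (d3.perm p)
end

section
/- The congruence rule CNG is admissible in the cut-free equational calculus cf.EQ: if Γ ⇒ F{v/r} and Λ ⇒ r=s are derivable in cf.EQ, then Γ, Λ ⇒ F{v/s} is derivable in cf.EQ. -/
/-- Max of all variable indices (including binders) occurring in a term. -/
def Tm.maxVar : Tm → Nat
  | .var w => w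
  | .const _ => 0
  | .app _ t => t.maxVar

/-- Max of all variable indices (including binders) occurring in a formula. -/
def Fml.maxVar : Fml → Nat
  | .eq t u => max t.maxVar u.maxVar
  | .atom _ t => t.maxVar
  | .imp A B => max A.maxVar B.maxVar
  | .and A B => max A.maxVar B.maxVar
  | .or A B => max A.maxVar B.maxVar
  | .neg A => A.maxVar
  | .all x A => max x A.maxVar
  | .ex x A => max x A.maxVar

lemma tm_subst_fresh {e : Tm} {w : Nat} (h : e.maxVar < w) (c : Tm) :
    Tm.subst w c e = e := by
  induction e with
  | var x => simp only [Tm.maxVar] at h; simp [Tm.subst, Nat.ne_of_lt h]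
  | const k => rfl
  | app f t ih => simp only [Tm.maxVar] at h; simp [Tm.subst, ih h]

lemma fml_subst_fresh {F : Fml} {w : Nat} (h : F.maxVar < w) (c : Tm) :
    Fml.subst w c F = F := by
  induction F with
  | eq t u =>
      simp only [Fml.maxVar, max_lt_iff] at h
      simp [Fml.subst, tm_subst_fresh h.1, tm_subst_fresh h.2]
  | atom p t => simp only [Fml.maxVar] at h; simp [Fml.subst, tm_subst_fresh h]
  | imp A B ihA ihB =>
      simp only [Fml.maxVar, max_lt_iff] at h; simp [Fml.subst, ihA h.1, ihB h.2]
  | and A B ihA ihB =>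
      simp only [Fml.maxVar, max_lt_iff] at h; simp [Fml.subst, ihA h.1, ihB h.2]
  | or A B ihA ihB =>
      simp only [Fml.maxVar, max_lt_iff] at h; simp [Fml.subst, ihA h.1, ihB h.2]
  | neg A ihA => simp only [Fml.maxVar] at h; simp [Fml.subst, ihA h]
  | all x A ihA =>
      simp only [Fml.maxVar, max_lt_iff] at h
      simp [Fml.subst, ihA h.2, Nat.ne_of_lt h.1]
  | ex x A ihA =>
      simp only [Fml.maxVar, max_lt_iff] at h
      simp [Fml.subst, ihA h.2, Nat.ne_of_lt h.1]

lemma tm_subst_subst {e : Tm} {w : Nat} (h : e.maxVar < w) (v : Nat) (t c : Tm) :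
    Tm.subst w c (Tm.subst v t e) = Tm.subst v (Tm.subst w c t) e := by
  induction e with
  | var x =>
      simp only [Tm.maxVar] at h
      by_cases hx : x = v <;> simp [Tm.subst, hx, Nat.ne_of_lt h]
  | const k => rfl
  | app f e ih => simp only [Tm.maxVar] at h; simp [Tm.subst, ih h]

lemma fml_subst_subst {F : Fml} {w : Nat} (h : F.maxVar < w) (v : Nat) (t c : Tm) :
    Fml.subst w c (Fml.subst v t F) = Fml.subst v (Tm.subst w c t) F := by
  induction F with
  | eq a b =>
      simp only [Fml.maxVar, max_lt_iff] at h
      simp [Fml.subst, tm_subst_subst h.1, tm_subst_subst h.2]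
  | atom p a => simp only [Fml.maxVar] at h; simp [Fml.subst, tm_subst_subst h]
  | imp A B ihA ihB =>
      simp only [Fml.maxVar, max_lt_iff] at h; simp [Fml.subst, ihA h.1, ihB h.2]
  | and A B ihA ihB =>
      simp only [Fml.maxVar, max_lt_iff] at h; simp [Fml.subst, ihA h.1, ihB h.2]
  | or A B ihA ihB =>
      simp only [Fml.maxVar, max_lt_iff] at h; simp [Fml.subst, ihA h.1, ihB h.2]
  | neg A ihA => simp only [Fml.maxVar] at h; simp [Fml.subst, ihA h]
  | all x A ihA =>
      simp only [Fml.maxVar, max_lt_iff] at h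
      by_cases hx : x = v <;>
        simp [Fml.subst, hx, Nat.ne_of_lt h.1, ihA h.2, fml_subst_fresh h.2]
  | ex x A ihA =>
      simp only [Fml.maxVar, max_lt_iff] at h
      by_cases hx : x = v <;>
        simp [Fml.subst, hx, Nat.ne_of_lt h.1, ihA h.2, fml_subst_fresh h.2]

lemma tm_subst_var_subst {t : Tm} {w : Nat} (h : t.maxVar < w) (v' : Nat) (c : Tm) :
    Tm.subst w c (Tm.subst v' (.var w) t) = Tm.subst v' c t := by
  induction t with
  | var x =>
      simp only [Tm.maxVar] at h
      by_cases hx : x = v' <;> simp [Tm.subst, hx, Nat.ne_of_lt h]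
  | const k => rfl
  | app f t ih => simp only [Tm.maxVar] at h; simp [Tm.subst, ih h]

/-- The key substitution identity used to trade `t{v'/b}` for `t{v'/a}` inside `F`
via a fresh variable `w`. -/
lemma subst_swap {F : Fml} {t : Tm} {w : Nat} (hF : F.maxVar < w) (ht : t.maxVar < w)
    (v v' : Nat) (c : Tm) :
    Fml.subst w c (Fml.subst v (Tm.subst v' (.var w) t) F)
      = Fml.subst v (Tm.subst v' c t) F := by
  rw [fml_subst_subst hF, tm_subst_var_subst ht]

/-- Derivability is closed under permutation of the context. -/
lemma der_perm_aux {ok : EqRule → Fml → Nat → Tm → Tm → Prop} {cut : Bool}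
    {Γ Γ' : List Fml} (p : Γ.Perm Γ') :
    ∀ (Δ : List Fml) (H : Fml), Der ok cut (Δ ++ Γ) H → Der ok cut (Δ ++ Γ') H := by
  induction p with
  | nil => exact fun Δ H h => h
  | cons a p ih =>
      intro Δ H h
      have := ih (Δ ++ [a]) H (by simpa using h)
      simpa using this
  | swap x y l =>
      intro Δ H h
      exact Der.exch h
  | trans p q ih1 ih2 => exact fun Δ H h => ih2 Δ H (ih1 Δ H h)

lemma der_perm {ok : EqRule → Fml → Nat → Tm → Tm → Prop} {cut : Bool}
    {Γ Γ' : List Fml} {H : Fml} (h : Der ok cut Γ H) (p : Γ.Perm Γ') :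
    Der ok cut Γ' H := der_perm_aux p [] H h

/-- Admissibility of `CNG`, in a form amenable to induction on the derivation
of `Λ ⇒ r = s`. -/
lemma cng_adm_main {Λ : List Fml} {E : Fml}
    (h2 : Der (allow [.r1, .r2]) false Λ E) :
    ∀ (r s : Tm), E = .eq r s → ∀ (Γ : List Fml) (F : Fml) (v : Nat),
      Der (allow [.r1, .r2]) false Γ (F.subst v r) →
      Der (allow [.r1, .r2]) false (Γ ++ Λ) (F.subst v s) := by
  induction h2 with
  | ax E =>
      rintro r s rfl Γ F v h1
      have : Der (allow [.r1, .r2]) false (.eq r s :: Γ) (F.subst v s) :=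
        Der.eq1 (by simp [allow]) h1
      exact der_perm this (by simpa using List.perm_append_comm (l₁ := [Fml.eq r s]) (l₂ := Γ))
  | refl t =>
      intro r s hE Γ F v h1
      cases hE
      simpa using h1
  | wk G d ih =>
      rintro r s rfl Γ F v h1
      have := Der.wk G (ih r s rfl Γ F v h1)
      exact der_perm this List.perm_middle.symm
  | exch d ih =>
      rename_i Γ₁ Γ₂ A B H
      rintro r s rfl Γ F v h1
      have := ih r s rfl Γ F v h1
      exact der_perm this
        (List.Perm.append_left Γ (List.Perm.append_left Γ₁ (List.Perm.swap B A Γ₂)))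
  | contr d ih =>
      rename_i Λ' G H
      rintro r s rfl Γ F v h1
      have h := ih r s rfl Γ F v h1
      have h' : Der (allow [.r1, .r2]) false (G :: G :: (Γ ++ Λ')) (F.subst v s) :=
        der_perm h (List.perm_middle.trans (List.Perm.cons G List.perm_middle))
      exact der_perm (Der.contr h') List.perm_middle.symm
  | cutr hcut _ _ _ _ => exact absurd hcut (by simp)
  | eq1 hok d ih =>
      rename_i Λ' G v' a b
      intro r s hE Γ F v h1
      cases G with
      | eq t u =>
          simp only [Fml.subst, Fml.eq.injEq] at hE
          obtain ⟨rfl, rfl⟩ := hE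
          set w := max F.maxVar (max t.maxVar u.maxVar) + 1 with hw
          have hF : F.maxVar < w := by omega
          have ht : t.maxVar < w := by omega
          have hu : u.maxVar < w := by omega
          have hA : Der (allow [.r1, .r2]) false (.eq a b :: Γ)
              (Fml.subst w a (Fml.subst v (Tm.subst v' (.var w) t) F)) :=
            Der.eq2 (by simp [allow]) (by rw [subst_swap hF ht]; exact h1)
          rw [subst_swap hF ht] at hA
          have hB := ih (Tm.subst v' a t) (Tm.subst v' a u) (by simp [Fml.subst])
            (.eq a b :: Γ) F v hA
          have hC : Der (allow [.r1, .r2]) false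
              (.eq a b :: ((.eq a b :: Γ) ++ Λ'))
              (Fml.subst w b (Fml.subst v (Tm.subst v' (.var w) u) F)) :=
            Der.eq1 (by simp [allow]) (by rw [subst_swap hF hu]; exact hB)
          rw [subst_swap hF hu] at hC
          exact der_perm (Der.contr hC) List.perm_middle.symm
      | atom p t => simp [Fml.subst] at hE
      | imp A B => simp [Fml.subst] at hE
      | and A B => simp [Fml.subst] at hE
      | or A B => simp [Fml.subst] at hE
      | neg A => simp [Fml.subst] at hE
      | all x A => simp [Fml.subst] at hE
      | ex x A => simp [Fml.subst] at hE
  | eq2 hok d ih =>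
      rename_i Λ' G v' a b
      intro r s hE Γ F v h1
      cases G with
      | eq t u =>
          simp only [Fml.subst, Fml.eq.injEq] at hE
          obtain ⟨rfl, rfl⟩ := hE
          set w := max F.maxVar (max t.maxVar u.maxVar) + 1 with hw
          have hF : F.maxVar < w := by omega
          have ht : t.maxVar < w := by omega
          have hu : u.maxVar < w := by omega
          have hA : Der (allow [.r1, .r2]) false (.eq b a :: Γ)
              (Fml.subst w a (Fml.subst v (Tm.subst v' (.var w) t) F)) :=
            Der.eq1 (by simp [allow]) (by rw [subst_swap hF ht]; exact h1)
          rw [subst_swap hF ht] at hA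
          have hB := ih (Tm.subst v' a t) (Tm.subst v' a u) (by simp [Fml.subst])
            (.eq b a :: Γ) F v hA
          have hC : Der (allow [.r1, .r2]) false
              (.eq b a :: ((.eq b a :: Γ) ++ Λ'))
              (Fml.subst w b (Fml.subst v (Tm.subst v' (.var w) u) F)) :=
            Der.eq2 (by simp [allow]) (by rw [subst_swap hF hu]; exact hB)
          rw [subst_swap hF hu] at hC
          exact der_perm (Der.contr hC) List.perm_middle.symm
      | atom p t => simp [Fml.subst] at hE
      | imp A B => simp [Fml.subst] at hE
      | and A B => simp [Fml.subst] at hE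
      | or A B => simp [Fml.subst] at hE
      | neg A => simp [Fml.subst] at hE
      | all x A => simp [Fml.subst] at hE
      | ex x A => simp [Fml.subst] at hE
  | eq1l hok _ _ => exact absurd hok (by simp [allow])
  | eq2l hok _ _ => exact absurd hok (by simp [allow])
  | cng hok _ _ _ _ => exact absurd hok (by simp [allow])

/-- The congruence rule `CNG` is admissible in `cf.EQ` (the cut-free calculus
with `=₁` and `=₂`): if `Γ ⇒ F{v/r}` and `Λ ⇒ r=s` are cut-free derivable,
then so is `Γ, Λ ⇒ F{v/s}`. -/
theorem cng_admissible_cfEQ (Γ Λ : List Fml) (F : Fml) (v : Nat) (r s : Tm)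
    (h1 : Der (allow [.r1, .r2]) false Γ (F.subst v r))
    (h2 : Der (allow [.r1, .r2]) false Λ (.eq r s)) :
    Der (allow [.r1, .r2]) false (Γ ++ Λ) (F.subst v s) :=
  cng_adm_main h2 r s rfl Γ F v h1
end

section
/- Each equality rule is derivable from its singleton version together with contraction: the rule =₁ with changing formula containing n ≥ 1 occurrences of the substituted variable is derivable via n applications of the singleton =₁ rule (where the changing formula has exactly one occurrence of the variable) followed by n−1 contractions. -/
/-- Side condition: only the rule `=₁` in its singleton version is allowed,
i.e. the changing formula has exactly one occurrence of the substituted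
variable. -/
def singOk : EqRule → Fml → Nat → Tm → Tm → Prop :=
  fun t F v _ _ => t = .r1 ∧ F.count v = 1

def Tm.maxv : Tm → Nat
  | .var w => w
  | .const _ => 0
  | .app _ t => t.maxv

lemma Tm.count_le_one (v : Nat) (t : Tm) : t.count v ≤ 1 := by
  induction t with
  | var w => simp only [Tm.count]; split <;> simp
  | const c => simp [Tm.count]
  | app f t ih => simpa only [Tm.count] using ih

lemma Tm.subst_of_count_zero {v : Nat} {t : Tm} (u : Tm) (h : t.count v = 0) :
    Tm.subst v u t = t := by
  induction t with
  | var w =>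
    simp only [Tm.count] at h
    simp only [Tm.subst]
    split
    · next hw => simp [hw] at h
    · rfl
  | const c => simp [Tm.subst]
  | app f t ih => simp only [Tm.count] at h; simp [Tm.subst, ih h]

lemma Tm.count_of_maxv {w : Nat} {t : Tm} (h : t.maxv < w) : t.count w = 0 := by
  induction t with
  | var x => simp only [Tm.maxv] at h; simp only [Tm.count]; split <;> omega
  | const c => simp [Tm.count]
  | app f t ih => simp only [Tm.maxv] at h; simp only [Tm.count]; exact ih h

lemma Tm.count_subst_self {v : Nat} {s : Tm} (t : Tm) (hs : s.count v = 0) :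
    (Tm.subst v s t).count v = 0 := by
  induction t with
  | var x =>
    by_cases hx : x = v <;> simp [Tm.subst, hx, Tm.count, hs]
  | const c => simp [Tm.subst, Tm.count]
  | app f t ih => simp [Tm.subst, Tm.count, ih]

lemma Tm.count_subst {v w : Nat} {s : Tm} (t : Tm) (hne : w ≠ v) (hs : s.count w = 0) :
    (Tm.subst v s t).count w = t.count w := by
  induction t with
  | var x =>
    by_cases hx : x = v
    · simp [Tm.subst, hx, Tm.count, hs, Ne.symm hne]
    · simp [Tm.subst, hx]
  | const c => simp [Tm.subst]
  | app f t ih => simp [Tm.subst, Tm.count, ih]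

lemma Tm.rename_subst {v w : Nat} {t : Tm} (u : Tm) (h : t.maxv < w) :
    Tm.subst w u (Tm.subst v (.var w) t) = Tm.subst v u t := by
  induction t with
  | var x =>
    simp only [Tm.maxv] at h
    by_cases hx : x = v
    · simp [Tm.subst, hx]
    · simp only [Tm.subst, hx, if_neg hx, if_false]
      have : x ≠ w := by omega
      simp [Tm.subst, this]
  | const c => simp [Tm.subst]
  | app f t ih => simp only [Tm.maxv] at h; simp [Tm.subst, ih h]

lemma Tm.rename_count {v w : Nat} {t : Tm} (h : t.maxv < w) :
    (Tm.subst v (.var w) t).count w = t.count v := by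
  induction t with
  | var x =>
    simp only [Tm.maxv] at h
    by_cases hx : x = v
    · simp [Tm.subst, hx, Tm.count]
    · have : x ≠ w := by omega
      simp [Tm.subst, hx, Tm.count, this]
  | const c => simp [Tm.subst, Tm.count]
  | app f t ih => simp only [Tm.maxv] at h; simp [Tm.subst, Tm.count, ih h]

def Fml.maxv : Fml → Nat
  | .eq a b => max a.maxv b.maxv
  | .atom _ a => a.maxv
  | .imp A B => max A.maxv B.maxv
  | .and A B => max A.maxv B.maxv
  | .or A B => max A.maxv B.maxv
  | .neg A => A.maxv
  | .all x A => max x A.maxv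
  | .ex x A => max x A.maxv

/-- Replace the first free occurrence of `v` in `F` by the term `t`. -/
def Fml.rep1 (v : Nat) (t : Tm) : Fml → Fml
  | .eq a b => if 1 ≤ a.count v then .eq (Tm.subst v t a) b else .eq a (Tm.subst v t b)
  | .atom p a => .atom p (Tm.subst v t a)
  | .imp A B => if 1 ≤ A.count v then .imp (Fml.rep1 v t A) B else .imp A (Fml.rep1 v t B)
  | .and A B => if 1 ≤ A.count v then .and (Fml.rep1 v t A) B else .and A (Fml.rep1 v t B)
  | .or A B => if 1 ≤ A.count v then .or (Fml.rep1 v t A) B else .or A (Fml.rep1 v t B)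
  | .neg A => .neg (Fml.rep1 v t A)
  | .all x A => .all x (if x = v then A else Fml.rep1 v t A)
  | .ex x A => .ex x (if x = v then A else Fml.rep1 v t A)

lemma Fml.subst_of_count_zero {v : Nat} {F : Fml} (u : Tm) (h : F.count v = 0) :
    Fml.subst v u F = F := by
  induction F with
  | eq a b =>
    simp only [Fml.count] at h
    simp [Fml.subst, Tm.subst_of_count_zero u (by omega : a.count v = 0),
      Tm.subst_of_count_zero u (by omega : b.count v = 0)]
  | atom p a => simp only [Fml.count] at h; simp [Fml.subst, Tm.subst_of_count_zero u h]
  | imp A B ihA ihB =>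
    simp only [Fml.count] at h
    simp [Fml.subst, ihA (by omega), ihB (by omega)]
  | and A B ihA ihB =>
    simp only [Fml.count] at h
    simp [Fml.subst, ihA (by omega), ihB (by omega)]
  | or A B ihA ihB =>
    simp only [Fml.count] at h
    simp [Fml.subst, ihA (by omega), ihB (by omega)]
  | neg A ihA => simp only [Fml.count] at h; simp [Fml.subst, ihA h]
  | all x A ihA =>
    simp only [Fml.count] at h
    simp only [Fml.subst]
    split
    · rfl
    · next hx => rw [ihA (by simpa [hx] using h)]
  | ex x A ihA =>
    simp only [Fml.count] at h
    simp only [Fml.subst]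
    split
    · rfl
    · next hx => rw [ihA (by simpa [hx] using h)]

lemma Fml.count_of_maxv {w : Nat} {F : Fml} (h : F.maxv < w) : F.count w = 0 := by
  induction F with
  | eq a b =>
    simp only [Fml.maxv, max_lt_iff] at h
    simp [Fml.count, Tm.count_of_maxv h.1, Tm.count_of_maxv h.2]
  | atom p a => simp only [Fml.maxv] at h; simp [Fml.count, Tm.count_of_maxv h]
  | imp A B ihA ihB =>
    simp only [Fml.maxv, max_lt_iff] at h; simp [Fml.count, ihA h.1, ihB h.2]
  | and A B ihA ihB =>
    simp only [Fml.maxv, max_lt_iff] at h; simp [Fml.count, ihA h.1, ihB h.2]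
  | or A B ihA ihB =>
    simp only [Fml.maxv, max_lt_iff] at h; simp [Fml.count, ihA h.1, ihB h.2]
  | neg A ihA => simp only [Fml.maxv] at h; simp [Fml.count, ihA h]
  | all x A ihA =>
    simp only [Fml.maxv, max_lt_iff] at h
    simp only [Fml.count]; split <;> simp [ihA h.2]
  | ex x A ihA =>
    simp only [Fml.maxv, max_lt_iff] at h
    simp only [Fml.count]; split <;> simp [ihA h.2]

lemma Fml.count_subst {v w : Nat} {s : Tm} (F : Fml) (hne : w ≠ v) (hs : s.count w = 0) :
    (Fml.subst v s F).count w = F.count w := by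
  induction F with
  | eq a b => simp [Fml.subst, Fml.count, Tm.count_subst _ hne hs]
  | atom p a => simp [Fml.subst, Fml.count, Tm.count_subst _ hne hs]
  | imp A B ihA ihB => simp [Fml.subst, Fml.count, ihA, ihB]
  | and A B ihA ihB => simp [Fml.subst, Fml.count, ihA, ihB]
  | or A B ihA ihB => simp [Fml.subst, Fml.count, ihA, ihB]
  | neg A ihA => simp [Fml.subst, Fml.count, ihA]
  | all x A ihA =>
    by_cases hxv : x = v <;> by_cases hxw : x = w <;>
      simp [Fml.subst, Fml.count, hxv, hxw, ihA]
  | ex x A ihA =>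
    by_cases hxv : x = v <;> by_cases hxw : x = w <;>
      simp [Fml.subst, Fml.count, hxv, hxw, ihA]

lemma Fml.rename_subst {v w : Nat} {F : Fml} (u : Tm) (h : F.maxv < w) :
    Fml.subst w u (Fml.subst v (.var w) F) = Fml.subst v u F := by
  induction F with
  | eq a b =>
    simp only [Fml.maxv, max_lt_iff] at h
    simp [Fml.subst, Tm.rename_subst u h.1, Tm.rename_subst u h.2]
  | atom p a => simp only [Fml.maxv] at h; simp [Fml.subst, Tm.rename_subst u h]
  | imp A B ihA ihB =>
    simp only [Fml.maxv, max_lt_iff] at h; simp [Fml.subst, ihA h.1, ihB h.2]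
  | and A B ihA ihB =>
    simp only [Fml.maxv, max_lt_iff] at h; simp [Fml.subst, ihA h.1, ihB h.2]
  | or A B ihA ihB =>
    simp only [Fml.maxv, max_lt_iff] at h; simp [Fml.subst, ihA h.1, ihB h.2]
  | neg A ihA => simp only [Fml.maxv] at h; simp [Fml.subst, ihA h]
  | all x A ihA =>
    simp only [Fml.maxv, max_lt_iff] at h
    have hxw : x ≠ w := by omega
    by_cases hx : x = v
    · simp [Fml.subst, hx, hxw, Fml.subst_of_count_zero u (Fml.count_of_maxv h.2)]
    · simp [Fml.subst, hx, hxw, ihA h.2]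
  | ex x A ihA =>
    simp only [Fml.maxv, max_lt_iff] at h
    have hxw : x ≠ w := by omega
    by_cases hx : x = v
    · simp [Fml.subst, hx, hxw, Fml.subst_of_count_zero u (Fml.count_of_maxv h.2)]
    · simp [Fml.subst, hx, hxw, ihA h.2]

lemma Fml.rename_count {v w : Nat} {F : Fml} (h : F.maxv < w) :
    (Fml.subst v (.var w) F).count w = F.count v := by
  induction F with
  | eq a b =>
    simp only [Fml.maxv, max_lt_iff] at h
    simp [Fml.subst, Fml.count, Tm.rename_count h.1, Tm.rename_count h.2]
  | atom p a => simp only [Fml.maxv] at h; simp [Fml.subst, Fml.count, Tm.rename_count h]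
  | imp A B ihA ihB =>
    simp only [Fml.maxv, max_lt_iff] at h; simp [Fml.subst, Fml.count, ihA h.1, ihB h.2]
  | and A B ihA ihB =>
    simp only [Fml.maxv, max_lt_iff] at h; simp [Fml.subst, Fml.count, ihA h.1, ihB h.2]
  | or A B ihA ihB =>
    simp only [Fml.maxv, max_lt_iff] at h; simp [Fml.subst, Fml.count, ihA h.1, ihB h.2]
  | neg A ihA => simp only [Fml.maxv] at h; simp [Fml.subst, Fml.count, ihA h]
  | all x A ihA =>
    simp only [Fml.maxv, max_lt_iff] at h
    have hxw : x ≠ w := by omega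
    by_cases hx : x = v
    · simp [Fml.subst, Fml.count, hx, hxw, Fml.count_of_maxv h.2]
    · simp [Fml.subst, Fml.count, hx, hxw, ihA h.2]
  | ex x A ihA =>
    simp only [Fml.maxv, max_lt_iff] at h
    have hxw : x ≠ w := by omega
    by_cases hx : x = v
    · simp [Fml.subst, Fml.count, hx, hxw, Fml.count_of_maxv h.2]
    · simp [Fml.subst, Fml.count, hx, hxw, ihA h.2]

lemma Fml.rep1_subst {v : Nat} {s : Tm} (F : Fml) (hs : s.count v = 0) :
    Fml.subst v s (Fml.rep1 v s F) = Fml.subst v s F := by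
  have tm : ∀ t : Tm, Tm.subst v s (Tm.subst v s t) = Tm.subst v s t := fun t =>
    Tm.subst_of_count_zero s (Tm.count_subst_self t hs)
  induction F with
  | eq a b =>
    simp only [Fml.rep1]
    split <;> simp [Fml.subst, tm]
  | atom p a => simp [Fml.rep1, Fml.subst, tm]
  | imp A B ihA ihB =>
    simp only [Fml.rep1]
    split <;> simp [Fml.subst, ihA, ihB]
  | and A B ihA ihB =>
    simp only [Fml.rep1]
    split <;> simp [Fml.subst, ihA, ihB]
  | or A B ihA ihB =>
    simp only [Fml.rep1]
    split <;> simp [Fml.subst, ihA, ihB]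
  | neg A ihA => simp [Fml.rep1, Fml.subst, ihA]
  | all x A ihA =>
    by_cases hx : x = v <;> simp [Fml.rep1, Fml.subst, hx, ihA]
  | ex x A ihA =>
    by_cases hx : x = v <;> simp [Fml.rep1, Fml.subst, hx, ihA]

lemma Fml.rep1_count {v : Nat} {r : Tm} (F : Fml) (hr : r.count v = 0)
    (h1 : 1 ≤ F.count v) : (Fml.rep1 v r F).count v + 1 = F.count v := by
  induction F with
  | eq a b =>
    simp only [Fml.count] at h1 ⊢
    simp only [Fml.rep1]
    split
    · next ha =>
      have := Tm.count_le_one v a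
      simp only [Fml.count, Tm.count_subst_self a hr]
      omega
    · next ha =>
      have := Tm.count_le_one v b
      simp only [Fml.count, Tm.count_subst_self b hr]
      omega
  | atom p a =>
    simp only [Fml.count] at h1 ⊢
    have := Tm.count_le_one v a
    simp only [Fml.rep1, Fml.count, Tm.count_subst_self a hr]
    omega
  | imp A B ihA ihB =>
    simp only [Fml.count] at h1 ⊢
    simp only [Fml.rep1]
    split
    · next hA => simp only [Fml.count]; have := ihA hA; omega
    · next hA => simp only [Fml.count]; have := ihB (by omega); omega
  | and A B ihA ihB =>
    simp only [Fml.count] at h1 ⊢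
    simp only [Fml.rep1]
    split
    · next hA => simp only [Fml.count]; have := ihA hA; omega
    · next hA => simp only [Fml.count]; have := ihB (by omega); omega
  | or A B ihA ihB =>
    simp only [Fml.count] at h1 ⊢
    simp only [Fml.rep1]
    split
    · next hA => simp only [Fml.count]; have := ihA hA; omega
    · next hA => simp only [Fml.count]; have := ihB (by omega); omega
  | neg A ihA =>
    simp only [Fml.count] at h1
    simpa only [Fml.rep1, Fml.count] using ihA h1
  | all x A ihA =>
    by_cases hx : x = v
    · simp [Fml.count, hx] at h1
    · simp only [Fml.count, if_neg hx] at h1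
      simpa only [Fml.rep1, if_neg hx, Fml.count] using ihA h1
  | ex x A ihA =>
    by_cases hx : x = v
    · simp [Fml.count, hx] at h1
    · simp only [Fml.count, if_neg hx] at h1
      simpa only [Fml.rep1, if_neg hx, Fml.count] using ihA h1

lemma Fml.rep1_count_w {v w : Nat} (F : Fml) (h : F.maxv < w) (h1 : 1 ≤ F.count v)
    (hwv : w ≠ v) : (Fml.rep1 v (.var w) F).count w = 1 := by
  induction F with
  | eq a b =>
    simp only [Fml.maxv, max_lt_iff] at h
    simp only [Fml.count] at h1
    have ca := Tm.count_le_one v a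
    have cb := Tm.count_le_one v b
    simp only [Fml.rep1]
    split
    · next ha =>
      simp only [Fml.count, Tm.rename_count h.1, Tm.count_of_maxv h.2]
      omega
    · next ha =>
      simp only [Fml.count, Tm.rename_count h.2, Tm.count_of_maxv h.1]
      omega
  | atom p a =>
    simp only [Fml.maxv] at h
    simp only [Fml.count] at h1
    have := Tm.count_le_one v a
    simp only [Fml.rep1, Fml.count, Tm.rename_count h]
    omega
  | imp A B ihA ihB =>
    simp only [Fml.maxv, max_lt_iff] at h
    simp only [Fml.count] at h1
    simp only [Fml.rep1]
    split
    · next hA =>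
      have e1 := ihA h.1 hA
      have e2 := Fml.count_of_maxv (w := w) h.2
      simp only [Fml.count, e1, e2]
    · next hA =>
      have e1 := ihB h.2 (by omega)
      have e2 := Fml.count_of_maxv (w := w) h.1
      simp only [Fml.count, e1, e2]
  | and A B ihA ihB =>
    simp only [Fml.maxv, max_lt_iff] at h
    simp only [Fml.count] at h1
    simp only [Fml.rep1]
    split
    · next hA =>
      have e1 := ihA h.1 hA
      have e2 := Fml.count_of_maxv (w := w) h.2
      simp only [Fml.count, e1, e2]
    · next hA =>
      have e1 := ihB h.2 (by omega)
      have e2 := Fml.count_of_maxv (w := w) h.1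
      simp only [Fml.count, e1, e2]
  | or A B ihA ihB =>
    simp only [Fml.maxv, max_lt_iff] at h
    simp only [Fml.count] at h1
    simp only [Fml.rep1]
    split
    · next hA =>
      have e1 := ihA h.1 hA
      have e2 := Fml.count_of_maxv (w := w) h.2
      simp only [Fml.count, e1, e2]
    · next hA =>
      have e1 := ihB h.2 (by omega)
      have e2 := Fml.count_of_maxv (w := w) h.1
      simp only [Fml.count, e1, e2]
  | neg A ihA =>
    simp only [Fml.maxv] at h
    simp only [Fml.count] at h1
    simp only [Fml.rep1, Fml.count]
    exact ihA h h1
  | all x A ihA =>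
    simp only [Fml.maxv, max_lt_iff] at h
    have hxw : x ≠ w := by omega
    by_cases hx : x = v
    · simp [Fml.count, hx] at h1
    · simp only [Fml.count, if_neg hx] at h1
      simp only [Fml.rep1, if_neg hx, Fml.count, if_neg hxw]
      exact ihA h.2 h1
  | ex x A ihA =>
    simp only [Fml.maxv, max_lt_iff] at h
    have hxw : x ≠ w := by omega
    by_cases hx : x = v
    · simp [Fml.count, hx] at h1
    · simp only [Fml.count, if_neg hx] at h1
      simp only [Fml.rep1, if_neg hx, Fml.count, if_neg hxw]
      exact ihA h.2 h1

lemma Tm.comm {v w : Nat} {r s : Tm} (t : Tm) (h : t.maxv < w)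
    (hrv : r.count v = 0) (hrw : r.count w = 0) (hsw : s.count w = 0) (hwv : w ≠ v) :
    Tm.subst w r (Tm.subst v s (Tm.subst v (.var w) t)) =
      Tm.subst v s (Tm.subst v r t) := by
  have h1 : Tm.subst v s (Tm.subst v (.var w) t) = Tm.subst v (.var w) t := by
    refine Tm.subst_of_count_zero s (Tm.count_subst_self t ?_)
    simp [Tm.count, hwv]
  rw [h1, Tm.rename_subst r h]
  have h2 : (Tm.subst v r t).count v = 0 := Tm.count_subst_self t hrv
  rw [Tm.subst_of_count_zero s h2]

lemma Fml.rep1_comm {v w : Nat} {r s : Tm} (F : Fml) (h : F.maxv < w)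
    (hrv : r.count v = 0) (hrw : r.count w = 0) (hsw : s.count w = 0) (hwv : w ≠ v) :
    Fml.subst w r (Fml.subst v s (Fml.rep1 v (.var w) F)) =
      Fml.subst v s (Fml.rep1 v r F) := by
  have tfix : ∀ t : Tm, t.maxv < w → Tm.subst w r (Tm.subst v s t) = Tm.subst v s t :=
    fun t ht => Tm.subst_of_count_zero r
      (by rw [Tm.count_subst t hwv hsw]; exact Tm.count_of_maxv ht)
  have ffix : ∀ G : Fml, G.maxv < w → Fml.subst w r (Fml.subst v s G) = Fml.subst v s G :=
    fun G hG => Fml.subst_of_count_zero r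
      (by rw [Fml.count_subst G hwv hsw]; exact Fml.count_of_maxv hG)
  induction F with
  | eq a b =>
    simp only [Fml.maxv, max_lt_iff] at h
    simp only [Fml.rep1]
    split <;>
      simp [Fml.subst, Tm.comm _ h.1 hrv hrw hsw hwv, Tm.comm _ h.2 hrv hrw hsw hwv,
        tfix a h.1, tfix b h.2]
  | atom p a =>
    simp only [Fml.maxv] at h
    simp [Fml.rep1, Fml.subst, Tm.comm _ h hrv hrw hsw hwv]
  | imp A B ihA ihB =>
    simp only [Fml.maxv, max_lt_iff] at h
    simp only [Fml.rep1]
    split <;> simp [Fml.subst, ihA h.1, ihB h.2, ffix A h.1, ffix B h.2]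
  | and A B ihA ihB =>
    simp only [Fml.maxv, max_lt_iff] at h
    simp only [Fml.rep1]
    split <;> simp [Fml.subst, ihA h.1, ihB h.2, ffix A h.1, ffix B h.2]
  | or A B ihA ihB =>
    simp only [Fml.maxv, max_lt_iff] at h
    simp only [Fml.rep1]
    split <;> simp [Fml.subst, ihA h.1, ihB h.2, ffix A h.1, ffix B h.2]
  | neg A ihA =>
    simp only [Fml.maxv] at h
    simp [Fml.rep1, Fml.subst, ihA h]
  | all x A ihA =>
    simp only [Fml.maxv, max_lt_iff] at h
    have hxw : x ≠ w := by omega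
    by_cases hx : x = v
    · simp [Fml.rep1, Fml.subst, hx, hxw, Fml.subst_of_count_zero r (Fml.count_of_maxv h.2)]
    · simp [Fml.rep1, Fml.subst, hx, hxw, ihA h.2]
  | ex x A ihA =>
    simp only [Fml.maxv, max_lt_iff] at h
    have hxw : x ≠ w := by omega
    by_cases hx : x = v
    · simp [Fml.rep1, Fml.subst, hx, hxw, Fml.subst_of_count_zero r (Fml.count_of_maxv h.2)]
    · simp [Fml.rep1, Fml.subst, hx, hxw, ihA h.2]

lemma main_aux (Γ : List Fml) (v : Nat) (r s : Tm) (hrv : r.count v = 0)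
    (hsv : s.count v = 0) :
    ∀ n (F : Fml), F.count v = n → Der singOk false Γ (Fml.subst v r F) →
      Der singOk false (.eq r s :: Γ) (Fml.subst v s F) := by
  intro n
  induction n with
  | zero =>
    intro F hF h
    rw [Fml.subst_of_count_zero r hF] at h
    rw [Fml.subst_of_count_zero s hF]
    exact Der.wk _ h
  | succ n ih =>
    intro F hF h
    set w : Nat := max (max F.maxv (max r.maxv s.maxv)) v + 1 with hw
    have hFw : F.maxv < w := by omega
    have hwv : w ≠ v := by omega
    have hrw : r.count w = 0 := Tm.count_of_maxv (by omega)
    have hsw : s.count w = 0 := Tm.count_of_maxv (by omega)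
    have hF1 : 1 ≤ F.count v := by omega
    -- first, use the IH on F with its first occurrence of v replaced by r
    have hG'c : (Fml.rep1 v r F).count v = n := by
      have := Fml.rep1_count F hrv hF1
      omega
    have h1 : Fml.subst v r (Fml.rep1 v r F) = Fml.subst v r F := Fml.rep1_subst F hrv
    have h2 : Der singOk false (.eq r s :: Γ) (Fml.subst v s (Fml.rep1 v r F)) :=
      ih (Fml.rep1 v r F) hG'c (by rw [h1]; exact h)
    -- the singleton changing formula
    set K : Fml := Fml.subst v s (Fml.rep1 v (.var w) F) with hK
    have hK1 : K.count w = 1 := by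
      rw [hK, Fml.count_subst _ hwv hsw]
      exact Fml.rep1_count_w F hFw hF1 hwv
    have hc : Fml.subst w r K = Fml.subst v s (Fml.rep1 v r F) :=
      Fml.rep1_comm F hFw hrv hrw hsw hwv
    have h3 : Der singOk false (.eq r s :: .eq r s :: Γ) (Fml.subst w s K) :=
      Der.eq1 (F := K) (v := w) (r := r) (s := s) ⟨rfl, hK1⟩ (by rw [hc]; exact h2)
    have hd : Fml.subst w s K = Fml.subst v s F := by
      rw [hK, Fml.rep1_comm F hFw hsv hsw hsw hwv]
      exact Fml.rep1_subst F hsv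
    rw [hd] at h3
    exact Der.contr h3

/-- The rule `=₁` with a changing formula containing `n ≥ 1` occurrences of the
substituted variable is derivable (without cut) from its singleton version
together with contraction: the general rule is admissible in the calculus whose
only equality rule is singleton `=₁`. -/
theorem eq1_from_singleton (Γ : List Fml) (F : Fml) (v : Nat) (r s : Tm)
    (hn : 1 ≤ F.count v)
    (h : Der singOk false Γ (F.subst v r)) :
    Der singOk false (.eq r s :: Γ) (F.subst v s) := by
  set w : Nat := max (max F.maxv (max r.maxv s.maxv)) v + 1 with hw
  have hFw : F.maxv < w := by omega
  have hrw : r.count w = 0 := Tm.count_of_maxv (by omega)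
  have hsw : s.count w = 0 := Tm.count_of_maxv (by omega)
  have h' : Der singOk false Γ (Fml.subst w r (Fml.subst v (.var w) F)) := by
    rw [Fml.rename_subst r hFw]; exact h
  have := main_aux Γ w r s hrw hsw _ (Fml.subst v (.var w) F) rfl h'
  rw [Fml.rename_subst s hFw] at this
  exact this
end

section
/- The rule =₂ is admissible in the cut-free calculus cf.EQ₁: if Γ ⇒ F{v/r} is derivable in cf.EQ₁ (with axioms, weak structural rules, =₁ and =₁ˡ, no cut), then Γ, s=r ⇒ F{v/s} is derivable in cf.EQ₁. -/
/-!
Without cut, `s = r` cannot simply be turned around. Instead one proves, by induction on a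
cut-free derivation of `Γ ⇒ C`, that every `C'` obtained from `C` by rewriting, in each term slot,
at most one subterm `a` to some `b` is derivable from any `Θ ⊇ Γ` in which each such `b = a` is
redundant, i.e. removable from antecedents containing `Θ`. The theorem is the rewrite
`F{v/r} ↦ F{v/s}` with `Θ = s = r, Γ`.

Function symbols are unary, so two rewritten subterms of one slot are nested; in the axiom
`⇒ t = t` this lets the equation of the outer rewrite absorb the inner one. In an `=₁` inference
from `Γ₀ ⇒ G{w/r₀}` to `r₀ = s₀, Γ₀ ⇒ G{w/s₀}`, a rewrite of `G{w/s₀}` factors as a rewrite of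
`G{w/r₀}`, handled by the induction hypothesis, followed by `=₁` steps with equations `r₀ = …`.
All equations that appear on the way are redundant by `=₁ˡ` and contraction.
-/

section Structural

variable {ok : EqRule → Fml → Nat → Tm → Tm → Prop} {cut : Bool} {Γ Δ : List Fml} {C : Fml}

theorem Der.perm_append (h : Γ.Perm Δ) :
    ∀ Θ, Der ok cut (Θ ++ Γ) C → Der ok cut (Θ ++ Δ) C := by
  induction h with
  | nil => exact fun _ d => d
  | cons A _ ih => exact fun Θ d => by simpa using ih (Θ ++ [A]) (by simpa using d)
  | swap A B _ => exact fun _ d => Der.exch d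
  | trans _ _ ih₁ ih₂ => exact fun Θ d => ih₂ Θ (ih₁ Θ d)

theorem Der.perm_s14 (h : Γ.Perm Δ) (d : Der ok cut Γ C) : Der ok cut Δ C :=
  Der.perm_append h [] d

theorem Der.weaken_left (Θ : List Fml) (d : Der ok cut Γ C) : Der ok cut (Θ ++ Γ) C := by
  induction Θ with
  | nil => exact d
  | cons A Θ ih => exact Der.wk A ih

theorem Der.absorb {A : Fml} (hA : A ∈ Γ) (d : Der ok cut (A :: Γ) C) : Der ok cut Γ C := by
  obtain ⟨Γ₁, Γ₂, rfl⟩ := List.append_of_mem hA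
  have hΓ : (Γ₁ ++ A :: Γ₂).Perm (A :: (Γ₁ ++ Γ₂)) := List.perm_middle
  exact (Der.contr (d.perm_s14 (hΓ.cons A))).perm_s14 hΓ.symm

theorem Der.of_append_of_subset (hΓ : Γ ⊆ Δ) (d : Der ok cut (Γ ++ Δ) C) : Der ok cut Δ C := by
  induction Γ with
  | nil => exact d
  | cons A Γ ih =>
    exact ih (List.subset_of_cons_subset hΓ)
      (d.absorb (List.mem_append_right _ (hΓ List.mem_cons_self)))

theorem Der.mono (hΓ : Γ ⊆ Δ) (d : Der ok cut Γ C) : Der ok cut Δ C :=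
  Der.of_append_of_subset hΓ ((d.weaken_left Δ).perm_s14 List.perm_append_comm)

end Structural

namespace Tm

def fill (L : List Nat) (t : Tm) : Tm := L.foldr app t

@[simp] theorem fill_nil (t : Tm) : fill [] t = t := rfl

@[simp] theorem fill_cons (f : Nat) (L : List Nat) (t : Tm) :
    fill (f :: L) t = app f (fill L t) := rfl

theorem fill_append (L M : List Nat) (t : Tm) : fill (L ++ M) t = fill L (fill M t) := by
  simp [fill, List.foldr_append]

@[simp] theorem subst_fill (L : List Nat) (v : Nat) (x t : Tm) :
    Tm.subst v x (fill L t) = fill L (Tm.subst v x t) := by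
  induction L with
  | nil => rfl
  | cons f L ih => simp [Tm.subst, ih]

@[simp] theorem subst_var_self (v : Nat) (x : Tm) : Tm.subst v x (var v) = x := by
  simp [Tm.subst]

theorem fill_eq_fill_cases {L₁ L₂ : List Nat} {a₁ a₂ : Tm} (h : fill L₁ a₁ = fill L₂ a₂) :
    (∃ M, L₂ = L₁ ++ M ∧ a₁ = fill M a₂) ∨ (∃ M, L₁ = L₂ ++ M ∧ a₂ = fill M a₁) := by
  induction L₁ generalizing L₂ with
  | nil => exact .inl ⟨L₂, rfl, h⟩
  | cons f L₁ ih =>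
    cases L₂ with
    | nil => exact .inr ⟨f :: L₁, rfl, h.symm⟩
    | cons g L₂ =>
      simp only [fill_cons, app.injEq] at h
      obtain ⟨rfl, h⟩ := h
      simpa using ih h

theorem eq_fill_var_or_subst_eq (t : Tm) (v : Nat) :
    (∃ P, t = fill P (var v)) ∨ ∀ x, Tm.subst v x t = t := by
  induction t with
  | var u =>
    by_cases hu : u = v
    · exact .inl ⟨[], by simp [hu]⟩
    · exact .inr fun x => by simp [Tm.subst, hu]
  | const c => exact .inr fun x => rfl
  | app f t ih =>
    rcases ih with ⟨P, rfl⟩ | ht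
    · exact .inl ⟨f :: P, rfl⟩
    · exact .inr fun x => by simp [Tm.subst, ht]

def maxVar_s14 : Tm → Nat
  | var w => w
  | const _ => 0
  | app _ t => maxVar_s14 t

theorem subst_of_maxVar_lt {t : Tm} {w : Nat} (h : t.maxVar_s14 < w) (x : Tm) :
    Tm.subst w x t = t := by
  induction t with
  | var u => simp only [maxVar_s14] at h; simp [Tm.subst, h.ne]
  | const c => rfl
  | app f t ih => simp [Tm.subst, ih h]

inductive Rewrite (R : Tm → Tm → Prop) : Tm → Tm → Prop
  | refl (t : Tm) : Rewrite R t t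
  | step (L : List Nat) {a b : Tm} : R a b → Rewrite R (fill L a) (fill L b)

theorem Rewrite.app {R : Tm → Tm → Prop} {t t' : Tm} (f : Nat) (h : Rewrite R t t') :
    Rewrite R (app f t) (app f t') := by
  cases h with
  | refl => exact .refl _
  | step L hab => exact .step (f :: L) hab

theorem Rewrite.mono {R R' : Tm → Tm → Prop} (hR : ∀ a b, R a b → R' a b) {t t' : Tm}
    (h : Rewrite R t t') : Rewrite R' t t' := by
  cases h with
  | refl => exact .refl _
  | step L hab => exact .step L (hR _ _ hab)

theorem rewrite_subst {R : Tm → Tm → Prop} {r s : Tm} (hrs : R r s) (v : Nat) (t : Tm) :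
    Rewrite R (Tm.subst v r t) (Tm.subst v s t) := by
  induction t with
  | var u =>
    by_cases hu : u = v
    · simpa [Tm.subst, hu] using Rewrite.step [] hrs
    · simpa [Tm.subst, hu] using Rewrite.refl _
  | const c => exact .refl _
  | app f t ih => exact ih.app f

theorem Rewrite.factor_subst {R Q : Tm → Tm → Prop} {r s : Tm} (hQ : Q r s)
    (hα : ∀ M a b, s = fill M a → R a b → Q r (fill M b))
    (hβ : ∀ M b, R (fill M s) b → R (fill M r) b) (v : Nat) (p : Tm) {u' : Tm}
    (h : Rewrite R (Tm.subst v s p) u') :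
    ∃ u'', Rewrite R (Tm.subst v r p) u'' ∧ Rewrite Q u'' u' := by
  rcases p.eq_fill_var_or_subst_eq v with ⟨P, rfl⟩ | hp
  · simp only [subst_fill, subst_var_self] at h ⊢
    generalize hs : fill P s = t at h
    cases h with
    | refl => exact ⟨fill P r, .refl _, hs ▸ .step P hQ⟩
    | @step L a b hab =>
      rcases fill_eq_fill_cases hs with ⟨M, rfl, hM⟩ | ⟨M, rfl, hM⟩
      · exact ⟨fill P r, .refl _, fill_append P M b ▸ .step P (hα M _ b hM hab)⟩
      · exact ⟨fill L b, fill_append L M r ▸ .step L (hβ M b (hM ▸ hab)), .refl _⟩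
  · rw [hp] at h ⊢
    exact ⟨u', h, .refl _⟩

end Tm

namespace Fml

def maxVar_s14 : Fml → Nat
  | eq t u => max t.maxVar_s14 u.maxVar_s14
  | atom _ t => t.maxVar_s14
  | imp A B => max A.maxVar_s14 B.maxVar_s14
  | and A B => max A.maxVar_s14 B.maxVar_s14
  | or A B => max A.maxVar_s14 B.maxVar_s14
  | neg A => A.maxVar_s14
  | all x A => max x A.maxVar_s14
  | ex x A => max x A.maxVar_s14

theorem subst_of_maxVar_lt {F : Fml} {w : Nat} (h : F.maxVar_s14 < w) (x : Tm) :
    F.subst w x = F := by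
  induction F with
  | eq t u =>
    simp only [maxVar_s14, max_lt_iff] at h
    simp [Fml.subst, Tm.subst_of_maxVar_lt h.1, Tm.subst_of_maxVar_lt h.2]
  | atom p t => simp [Fml.subst, Tm.subst_of_maxVar_lt (show t.maxVar_s14 < w from h)]
  | imp A B ihA ihB | and A B ihA ihB | or A B ihA ihB =>
    simp only [maxVar_s14, max_lt_iff] at h
    simp [Fml.subst, ihA h.1, ihB h.2]
  | neg A ih => simp [Fml.subst, ih h]
  | all y A ih | ex y A ih =>
    simp only [maxVar_s14, max_lt_iff] at h
    simp [Fml.subst, h.1.ne, ih h.2]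

inductive Rewrite (R : Tm → Tm → Prop) : Fml → Fml → Prop
  | eq {t t' u u'} : t.Rewrite R t' → u.Rewrite R u' → Rewrite R (eq t u) (eq t' u')
  | atom (p) {t t'} : t.Rewrite R t' → Rewrite R (atom p t) (atom p t')
  | imp {A A' B B'} : Rewrite R A A' → Rewrite R B B' → Rewrite R (imp A B) (imp A' B')
  | and {A A' B B'} : Rewrite R A A' → Rewrite R B B' → Rewrite R (and A B) (and A' B')
  | or {A A' B B'} : Rewrite R A A' → Rewrite R B B' → Rewrite R (or A B) (or A' B')
  | neg {A A'} : Rewrite R A A' → Rewrite R (neg A) (neg A')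
  | all (x) {A A'} : Rewrite R A A' → Rewrite R (all x A) (all x A')
  | ex (x) {A A'} : Rewrite R A A' → Rewrite R (ex x A) (ex x A')

variable {R : Tm → Tm → Prop}

theorem Rewrite.refl (C : Fml) : Rewrite R C C := by
  induction C with
  | eq t u => exact .eq (.refl t) (.refl u)
  | atom p t => exact .atom p (.refl t)
  | imp _ _ ihA ihB => exact .imp ihA ihB
  | and _ _ ihA ihB => exact .and ihA ihB
  | or _ _ ihA ihB => exact .or ihA ihB
  | neg _ ih => exact .neg ih
  | all x _ ih => exact .all x ih
  | ex x _ ih => exact .ex x ih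

theorem Rewrite.mono {R' : Tm → Tm → Prop} (hR : ∀ a b, R a b → R' a b) {C C' : Fml}
    (h : Rewrite R C C') : Rewrite R' C C' := by
  induction h with
  | eq ht hu => exact .eq (ht.mono hR) (hu.mono hR)
  | atom p ht => exact .atom p (ht.mono hR)
  | imp _ _ ihA ihB => exact .imp ihA ihB
  | and _ _ ihA ihB => exact .and ihA ihB
  | or _ _ ihA ihB => exact .or ihA ihB
  | neg _ ih => exact .neg ih
  | all x _ ih => exact .all x ih
  | ex x _ ih => exact .ex x ih

theorem rewrite_subst {r s : Tm} (hrs : R r s) (v : Nat) (F : Fml) :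
    Rewrite R (F.subst v r) (F.subst v s) := by
  induction F with
  | eq t u => exact .eq (Tm.rewrite_subst hrs v t) (Tm.rewrite_subst hrs v u)
  | atom p t => exact .atom p (Tm.rewrite_subst hrs v t)
  | imp _ _ ihA ihB => exact .imp ihA ihB
  | and _ _ ihA ihB => exact .and ihA ihB
  | or _ _ ihA ihB => exact .or ihA ihB
  | neg _ ih => exact .neg ih
  | all x A ih =>
    by_cases hx : x = v
    · simpa [Fml.subst, hx] using Rewrite.refl _
    · simpa [Fml.subst, hx] using ih.all x
  | ex x A ih =>
    by_cases hx : x = v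
    · simpa [Fml.subst, hx] using Rewrite.refl _
    · simpa [Fml.subst, hx] using ih.ex x

/-- The pattern variable `w` only has to exceed `N`, so that it can be chosen fresh for a
surrounding frame. -/
def StepClosed (R : Tm → Tm → Prop) (N : Nat) (P : Fml → Prop) : Prop :=
  ∀ (X : Fml) (w : Nat) (a b : Tm), N < w → R a b → P (X.subst w a) → P (X.subst w b)

theorem StepClosed.comp {N : Nat} {P : Fml → Prop} (hP : StepClosed R N P) {K : Nat}
    (f : Fml → Fml)
    (hf : ∀ (X : Fml) (w : Nat) (x : Tm), K < w → (f X).subst w x = f (X.subst w x)) :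
    StepClosed R (max N K) (P ∘ f) := by
  intro X w a b hw hab
  simp only [Function.comp_apply]
  rw [← hf X w a (by omega), ← hf X w b (by omega)]
  exact hP (f X) w a b (by omega) hab

theorem Rewrite.transport {C C' : Fml} (h : Rewrite R C C') :
    ∀ {P : Fml → Prop} (N : Nat), StepClosed R N P → P C → P C' := by
  induction h with
  | @eq t t' u u' ht hu =>
    intro P N hP hC
    have hC' : P (Fml.eq t' u) := by
      cases ht with
      | refl => exact hC
      | @step L a b hab =>
        obtain ⟨w, hNw, hw⟩ : ∃ w, N < w ∧ u.maxVar_s14 < w :=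
          ⟨max N u.maxVar_s14 + 1, by omega, by omega⟩
        have key := hP (Fml.eq (Tm.fill L (.var w)) u) w a b hNw hab
        simp only [Fml.subst, Tm.subst_fill, Tm.subst_var_self, Tm.subst_of_maxVar_lt hw] at key
        exact key hC
    cases hu with
    | refl => exact hC'
    | @step L a b hab =>
      obtain ⟨w, hNw, hw⟩ : ∃ w, N < w ∧ t'.maxVar_s14 < w :=
        ⟨max N t'.maxVar_s14 + 1, by omega, by omega⟩
      have key := hP (Fml.eq t' (Tm.fill L (.var w))) w a b hNw hab
      simp only [Fml.subst, Tm.subst_fill, Tm.subst_var_self, Tm.subst_of_maxVar_lt hw] at key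
      exact key hC'
  | atom p ht =>
    intro P N hP hC
    cases ht with
    | refl => exact hC
    | @step L a b hab =>
      have key := hP (Fml.atom p (Tm.fill L (.var (N + 1)))) _ a b N.lt_succ_self hab
      simp only [Fml.subst, Tm.subst_fill, Tm.subst_var_self] at key
      exact key hC
  | @imp A A' B B' _ _ ihA ihB =>
    intro P N hP hC
    refine ihB _ (hP.comp (K := A'.maxVar_s14) (Fml.imp A') fun X w x hw => ?_)
      (ihA _ (hP.comp (K := B.maxVar_s14) (Fml.imp · B) fun X w x hw => ?_) hC)
    all_goals simp [Fml.subst, subst_of_maxVar_lt hw]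
  | @and A A' B B' _ _ ihA ihB =>
    intro P N hP hC
    refine ihB _ (hP.comp (K := A'.maxVar_s14) (Fml.and A') fun X w x hw => ?_)
      (ihA _ (hP.comp (K := B.maxVar_s14) (Fml.and · B) fun X w x hw => ?_) hC)
    all_goals simp [Fml.subst, subst_of_maxVar_lt hw]
  | @or A A' B B' _ _ ihA ihB =>
    intro P N hP hC
    refine ihB _ (hP.comp (K := A'.maxVar_s14) (Fml.or A') fun X w x hw => ?_)
      (ihA _ (hP.comp (K := B.maxVar_s14) (Fml.or · B) fun X w x hw => ?_) hC)
    all_goals simp [Fml.subst, subst_of_maxVar_lt hw]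
  | neg _ ih =>
    exact fun N hP => ih _ (hP.comp (K := 0) Fml.neg fun X w x _ => rfl)
  | all x _ ih =>
    exact fun N hP => ih _
      (hP.comp (K := x) (Fml.all x) fun X w y hw => by simp [Fml.subst, hw.ne])
  | ex x _ ih =>
    exact fun N hP => ih _
      (hP.comp (K := x) (Fml.ex x) fun X w y hw => by simp [Fml.subst, hw.ne])

/-- A rewrite of `F{v/s}` whose redex contains an occurrence of `s` coming from `v` is moved to
`F{v/r}` (by `hβ`); any other such occurrence, with the rewrite inside it if there is one, becomes
a `Q`-step out of `r` (by `hQ` or `hα`). -/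
theorem Rewrite.factor_subst {Q : Tm → Tm → Prop} {r s : Tm} (hQ : Q r s)
    (hα : ∀ M a b, s = .fill M a → R a b → Q r (.fill M b))
    (hβ : ∀ M b, R (.fill M s) b → R (.fill M r) b) (v : Nat) (F : Fml) {C' : Fml}
    (h : Rewrite R (F.subst v s) C') :
    ∃ C'', Rewrite R (F.subst v r) C'' ∧ Rewrite Q C'' C' := by
  induction F generalizing C' with
  | eq t u =>
    cases h with
    | eq ht hu =>
      obtain ⟨t'', ht₁, ht₂⟩ := Tm.Rewrite.factor_subst hQ hα hβ v t ht
      obtain ⟨u'', hu₁, hu₂⟩ := Tm.Rewrite.factor_subst hQ hα hβ v u hu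
      exact ⟨Fml.eq t'' u'', .eq ht₁ hu₁, .eq ht₂ hu₂⟩
  | atom p t =>
    cases h with
    | atom _ ht =>
      obtain ⟨t'', ht₁, ht₂⟩ := Tm.Rewrite.factor_subst hQ hα hβ v t ht
      exact ⟨Fml.atom p t'', .atom p ht₁, .atom p ht₂⟩
  | imp A B ihA ihB =>
    cases h with
    | imp hA hB =>
      obtain ⟨A'', hA₁, hA₂⟩ := ihA hA
      obtain ⟨B'', hB₁, hB₂⟩ := ihB hB
      exact ⟨Fml.imp A'' B'', .imp hA₁ hB₁, .imp hA₂ hB₂⟩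
  | and A B ihA ihB =>
    cases h with
    | and hA hB =>
      obtain ⟨A'', hA₁, hA₂⟩ := ihA hA
      obtain ⟨B'', hB₁, hB₂⟩ := ihB hB
      exact ⟨Fml.and A'' B'', .and hA₁ hB₁, .and hA₂ hB₂⟩
  | or A B ihA ihB =>
    cases h with
    | or hA hB =>
      obtain ⟨A'', hA₁, hA₂⟩ := ihA hA
      obtain ⟨B'', hB₁, hB₂⟩ := ihB hB
      exact ⟨Fml.or A'' B'', .or hA₁ hB₁, .or hA₂ hB₂⟩
  | neg A ih =>
    cases h with
    | neg hA =>
      obtain ⟨A'', hA₁, hA₂⟩ := ih hA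
      exact ⟨Fml.neg A'', .neg hA₁, .neg hA₂⟩
  | all x A ih =>
    by_cases hx : x = v
    · simp only [Fml.subst, hx, if_true] at h ⊢
      exact ⟨C', h, .refl _⟩
    · simp only [Fml.subst, hx, if_false] at h ⊢
      cases h with
      | all _ hA =>
        obtain ⟨A'', hA₁, hA₂⟩ := ih hA
        exact ⟨Fml.all x A'', .all x hA₁, .all x hA₂⟩
  | ex x A ih =>
    by_cases hx : x = v
    · simp only [Fml.subst, hx, if_true] at h ⊢
      exact ⟨C', h, .refl _⟩
    · simp only [Fml.subst, hx, if_false] at h ⊢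
      cases h with
      | ex _ hA =>
        obtain ⟨A'', hA₁, hA₂⟩ := ih hA
        exact ⟨Fml.ex x A'', .ex x hA₁, .ex x hA₂⟩

end Fml

abbrev CfEq1 (Γ : List Fml) (C : Fml) : Prop := Der (allow [.r1, .l1]) false Γ C

theorem CfEq1.eq1 {Γ : List Fml} (F : Fml) (v : Nat) (r s : Tm) (d : CfEq1 Γ (F.subst v r)) :
    CfEq1 (.eq r s :: Γ) (F.subst v s) :=
  Der.eq1 (by simp [allow]) d

theorem CfEq1.eq1l {Γ : List Fml} {H : Fml} (F : Fml) (v : Nat) (r s : Tm)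
    (d : CfEq1 (F.subst v r :: Γ) H) : CfEq1 (F.subst v s :: .eq r s :: Γ) H :=
  Der.eq1l (by simp [allow]) d

/-- Stands in for a cut against a derivation of `Θ ⇒ A`. -/
def Redundant (Θ : List Fml) (A : Fml) : Prop :=
  ∀ ⦃Δ : List Fml⦄ ⦃H : Fml⦄, Θ ⊆ Δ → CfEq1 (A :: Δ) H → CfEq1 Δ H

namespace Redundant

variable {Θ : List Fml}

theorem of_mem {A : Fml} (hA : A ∈ Θ) : Redundant Θ A :=
  fun _ _ hΔ d => d.absorb (hΔ hA)

theorem mono {Θ' : List Fml} {A : Fml} (h : Redundant Θ A) (hΘ : Θ ⊆ Θ') : Redundant Θ' A :=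
  fun _ _ hΔ d => h (List.Subset.trans hΘ hΔ) d

theorem subst {a b : Tm} (h : Redundant Θ (.eq a b)) (X : Fml) (w : Nat)
    (d : CfEq1 Θ (X.subst w a)) : CfEq1 Θ (X.subst w b) :=
  h (List.Subset.refl Θ) (CfEq1.eq1 X w a b d)

theorem eq_fill {c x y : Tm} {S : List Nat} (hc : Redundant Θ (.eq c (Tm.fill S y)))
    (hxy : Redundant Θ (.eq x y)) : Redundant Θ (.eq c (Tm.fill S x)) := by
  intro Δ H hΔ d
  have hw : c.maxVar_s14 < c.maxVar_s14 + 1 := Nat.lt_succ_self _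
  have d' := CfEq1.eq1l (.eq c (Tm.fill S (.var (c.maxVar_s14 + 1)))) (c.maxVar_s14 + 1) x y
    (by simpa [Fml.subst, Tm.subst_of_maxVar_lt hw] using d)
  simp only [Fml.subst, Tm.subst_fill, Tm.subst_var_self, Tm.subst_of_maxVar_lt hw] at d'
  exact hc hΔ (hxy (List.Subset.trans hΔ (List.subset_cons_self _ _)) (Der.exch (Γ₁ := []) d'))

theorem eq_fill_fill {c d : Tm} (h : Redundant Θ (.eq c d)) (L : List Nat) :
    CfEq1 Θ (.eq (Tm.fill L c) (Tm.fill L d)) ∧ CfEq1 Θ (.eq (Tm.fill L d) (Tm.fill L c)) := by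
  have hw : c.maxVar_s14 < c.maxVar_s14 + 1 := Nat.lt_succ_self _
  have hrefl : CfEq1 Θ (.eq (Tm.fill L c) (Tm.fill L c)) := (Der.refl _).mono (List.nil_subset _)
  constructor
  · simpa [Fml.subst, Tm.subst_of_maxVar_lt hw] using
      h.subst (.eq (Tm.fill L c) (Tm.fill L (.var (c.maxVar_s14 + 1)))) (c.maxVar_s14 + 1)
        (by simpa [Fml.subst, Tm.subst_of_maxVar_lt hw] using hrefl)
  · simpa [Fml.subst, Tm.subst_of_maxVar_lt hw] using
      h.subst (.eq (Tm.fill L (.var (c.maxVar_s14 + 1))) (Tm.fill L c)) (c.maxVar_s14 + 1)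
        (by simpa [Fml.subst, Tm.subst_of_maxVar_lt hw] using hrefl)

end Redundant

theorem CfEq1.eq_of_rewrite_of_rewrite {Θ : List Fml} {t t₁ t₂ : Tm}
    (h₁ : Tm.Rewrite (fun a b => Redundant Θ (.eq b a)) t t₁)
    (h₂ : Tm.Rewrite (fun a b => Redundant Θ (.eq b a)) t t₂) : CfEq1 Θ (.eq t₁ t₂) := by
  cases h₂ with
  | refl =>
    cases h₁ with
    | refl => exact (Der.refl t).mono (List.nil_subset _)
    | step L h => exact (h.eq_fill_fill L).1
  | @step L₂ a₂ b₂ h₂ =>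
    generalize ht : Tm.fill L₂ a₂ = t at h₁
    cases h₁ with
    | refl => exact ht ▸ (h₂.eq_fill_fill L₂).2
    | @step L₁ a₁ b₁ h₁ =>
      rcases Tm.fill_eq_fill_cases ht with ⟨M, rfl, hM⟩ | ⟨M, rfl, hM⟩
      · rw [Tm.fill_append]
        exact ((hM ▸ h₂).eq_fill h₁).eq_fill_fill L₂ |>.2
      · rw [Tm.fill_append]
        exact ((hM ▸ h₁).eq_fill h₂).eq_fill_fill L₁ |>.1

theorem CfEq1.rewrite_succedent {Γ : List Fml} {C : Fml} (d : CfEq1 Γ C) {Θ : List Fml}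
    (hΓ : Γ ⊆ Θ) {C' : Fml} (hC : Fml.Rewrite (fun a b => Redundant Θ (.eq b a)) C C') :
    CfEq1 Θ C' := by
  induction d generalizing Θ C' with
  | ax F =>
    have hF : F ∈ Θ := hΓ List.mem_cons_self
    -- walk back from `C' ⇒ C'` to `F ⇒ C'`, one `=₁ˡ` per step
    refine Der.absorb hF (hC.transport (P := fun X => CfEq1 (X :: Θ) C' → CfEq1 (F :: Θ) C') 0
      (fun X w a b _ hab hX dX => ?_) id ((Der.ax C').mono (by simp)))
    exact hX (hab (List.subset_cons_self _ _) (Der.exch (Γ₁ := []) (CfEq1.eq1l X w b a dX)))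
  | refl t =>
    cases hC with
    | eq h₁ h₂ => exact CfEq1.eq_of_rewrite_of_rewrite h₁ h₂
  | wk F _ ih => exact ih (List.cons_subset.1 hΓ).2 hC
  | exch _ ih =>
    exact ih (List.Subset.trans (List.Perm.append_left _ (List.Perm.swap _ _ _)).subset hΓ) hC
  | contr _ ih => exact ih (List.cons_subset.2 ⟨hΓ List.mem_cons_self, hΓ⟩) hC
  | cutr hcut => cases hcut
  | @eq1 Γ₀ G w r₀ s₀ _ _ ih =>
    obtain ⟨hrs, hΓ₀⟩ := List.cons_subset.1 hΓ
    have hrs : Redundant Θ (.eq r₀ s₀) := .of_mem hrs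
    obtain ⟨C'', hr, hq⟩ := hC.factor_subst (Q := fun a b => Redundant Θ (.eq a b)) hrs
      (fun M a b hs hab => (hs ▸ hrs).eq_fill hab) (fun M b h => h.eq_fill hrs) w G
    exact hq.transport 0 (fun X x a b _ hab => hab.subst X x) (ih hΓ₀ hr)
  | @eq1l Γ₀ F v r s H _ _ ih =>
    simp only [List.cons_subset] at hΓ
    obtain ⟨hFs, hrs, hΓ₀⟩ := hΓ
    have d := ih (Θ := F.subst v r :: Θ) (List.cons_subset_cons _ hΓ₀)
      (hC.mono fun a b h => h.mono (List.subset_cons_self _ _))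
    exact (CfEq1.eq1l F v r s d).mono
      (List.cons_subset.2 ⟨hFs, List.cons_subset.2 ⟨hrs, .refl _⟩⟩)
  | eq2 hok | eq2l hok | cng hok => simp [allow] at hok

/-- The rule `=₂` is admissible in `cf.EQ₁` (the cut-free calculus with `=₁`
and `=₁ˡ`): if `Γ ⇒ F{v/r}` is derivable in `cf.EQ₁`, then so is
`Γ, s=r ⇒ F{v/s}`. -/
theorem eq2_admissible_cfEQ1 (Γ : List Fml) (F : Fml) (v : Nat) (r s : Tm)
    (h : Der (allow [.r1, .l1]) false Γ (F.subst v r)) :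
    Der (allow [.r1, .l1]) false (.eq s r :: Γ) (F.subst v s) :=
  CfEq1.rewrite_succedent h (List.subset_cons_self _ _)
    (Fml.rewrite_subst (Redundant.of_mem List.mem_cons_self) v F)
end

section
/- Cut elimination fails for the system with rules =₁ and =₂ˡ: if a, b, c are distinct constants, the sequent a=c, b=c ⇒ a=b is derivable with cut but has no cut-free derivation in the calculus with axioms F ⇒ F and ⇒ t=t, weak structural rules, =₁, and =₂ˡ. -/
lemma subst_eq_const {v : Nat} {s t : Tm} {k : Nat}
    (h : Tm.subst v s t = .const k) : t = .const k ∨ (t = .var v ∧ s = .const k) := by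
  cases t with
  | var w =>
    simp only [Tm.subst] at h
    split at h
    · right; simp_all
    · simp_all
  | const m => simp only [Tm.subst] at h; left; exact h
  | app f t => simp [Tm.subst] at h

/-- In the set of allowed antecedent formulas. -/
def InS (a b c : Nat) (G : Fml) : Prop :=
  G = .eq (.const c) (.const c) ∨ G = .eq (.const a) (.const c) ∨
    G = .eq (.const b) (.const c)

lemma no_cutfree (a b c : Nat) (hab : a ≠ b) (hbc : b ≠ c) (hac : a ≠ c) :
    ∀ {Γ H}, Der (allow [.r1, .l2]) false Γ H →
      (∀ F ∈ Γ, InS a b c F) → H ≠ .eq (.const a) (.const b) := by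
  intro Γ H h
  induction h with
  | ax F =>
    intro hΓ hH
    have := hΓ F (by simp)
    rw [hH] at this
    rcases this with h1 | h1 | h1 <;> simp_all [InS]
  | refl t =>
    intro _ hH
    cases hH
    exact hab rfl
  | wk F _ ih =>
    intro hΓ
    exact ih (fun G hG => hΓ G (by simp [hG]))
  | exch _ ih =>
    intro hΓ
    apply ih
    intro G hG
    apply hΓ
    simp only [List.mem_append, List.mem_cons] at hG ⊢
    tauto
  | contr _ ih =>
    intro hΓ
    apply ih
    intro G hG
    apply hΓ
    simp only [List.mem_cons] at hG ⊢
    tauto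
  | cutr hcut => simp at hcut
  | @eq1 Γ F v r s hok _ ih =>
    intro hΓ hH
    -- the principal equation r = s is in the set, so s = const c
    have hrs := hΓ (.eq r s) (by simp)
    -- F must be an equation
    obtain ⟨t, u, rfl⟩ : ∃ t u, F = .eq t u := by
      cases F <;> simp_all [Fml.subst]
    simp only [Fml.subst, Fml.eq.injEq] at hH
    obtain ⟨ht, hu⟩ := hH
    have hs : s = .const c := by
      rcases hrs with h1 | h1 | h1 <;> simp_all [InS]
    subst hs
    rcases subst_eq_const ht with h1 | ⟨_, h1⟩
    · rcases subst_eq_const hu with h2 | ⟨_, h2⟩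
      · subst h1 h2
        exact ih (fun G hG => hΓ G (by simp [hG])) (by simp [Fml.subst, Tm.subst])
      · exact hbc (by injection h2 with h; exact h.symm)
    · exact hac (by injection h1 with h; exact h.symm)
  | eq2 hok => intro _ _; simp [allow] at hok
  | eq1l hok => intro _ _; simp [allow] at hok
  | @eq2l Γ F v r s H hok _ ih =>
    intro hΓ hH
    apply ih _ hH
    intro G hG
    simp only [List.mem_cons] at hG
    rcases hG with rfl | hG
    · -- G = F.subst v r ; show it is in the set
      have hsr := hΓ (.eq s r) (by simp)
      have hFs := hΓ (F.subst v s) (by simp)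
      obtain ⟨t, u, rfl⟩ : ∃ t u, F = .eq t u := by
        rcases hFs with h1 | h1 | h1 <;> cases F <;> simp_all [Fml.subst]
      -- r = const c always
      have hr : r = .const c := by
        rcases hsr with h1 | h1 | h1 <;> simp_all [InS]
      subst hr
      rcases hFs with h1 | h1 | h1 <;>
        simp only [InS, Fml.subst, Fml.eq.injEq] at h1 ⊢ <;>
        obtain ⟨ht, hu⟩ := h1 <;>
        rcases subst_eq_const ht with h2 | ⟨h2, h3⟩ <;>
        rcases subst_eq_const hu with h4 | ⟨h4, h5⟩ <;>
        subst h2 <;> subst h4 <;>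
        simp_all [InS, Tm.subst]
    · exact hΓ G (by simp [hG])
  | cng hok => intro _ _; simp [allow] at hok


/-- Cut elimination fails for the calculus with the rules `=₁` and `=₂ˡ`: for
distinct constants `a`, `b`, `c`, the sequent `a=c, b=c ⇒ a=b` is derivable
with cut but has no cut-free derivation. -/
theorem cut_elimination_fails_r1_l2 (a b c : Nat)
    (hab : a ≠ b) (hbc : b ≠ c) (hac : a ≠ c) :
    Der (allow [.r1, .l2]) true
        [.eq (.const a) (.const c), .eq (.const b) (.const c)]
        (.eq (.const a) (.const b)) ∧
    ¬ Der (allow [.r1, .l2]) false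
        [.eq (.const a) (.const c), .eq (.const b) (.const c)]
        (.eq (.const a) (.const b)) := by
  constructor
  · -- with cut
    have r0 : Der (allow [.r1, .l2]) true []
        (Fml.subst 0 (.const b) (.eq (.var 0) (.const b))) := by
      simpa [Fml.subst, Tm.subst] using
        (Der.refl (.const b) : Der (allow [.r1, .l2]) true [] _)
    have d1' := Der.eq1 (s := .const c) (show allow [.r1, .l2] .r1 (.eq (.var 0) (.const b)) 0 (.const b) (.const c) by simp [allow]) r0
    have d1 : Der (allow [.r1, .l2]) true [.eq (.const b) (.const c)]
        (.eq (.const c) (.const b)) := by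
      simpa [Fml.subst, Tm.subst] using d1'
    have a0 : Der (allow [.r1, .l2]) true [.eq (.const a) (.const c)]
        (Fml.subst 0 (.const c) (.eq (.const a) (.var 0))) := by
      simpa [Fml.subst, Tm.subst] using
        (Der.ax (.eq (.const a) (.const c)) : Der (allow [.r1, .l2]) true _ _)
    have d2' := Der.eq1 (s := .const b) (show allow [.r1, .l2] .r1 (.eq (.const a) (.var 0)) 0 (.const c) (.const b) by simp [allow]) a0
    have d2 : Der (allow [.r1, .l2]) true
        [.eq (.const c) (.const b), .eq (.const a) (.const c)]
        (.eq (.const a) (.const b)) := by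
      simpa [Fml.subst, Tm.subst] using d2'
    have d3 := Der.cutr rfl d1 d2
    have d4 := Der.exch (Γ₁ := []) (Γ₂ := []) d3
    exact d4
  · intro h
    exact no_cutfree a b c hab hbc hac h
      (by intro F hF; simp only [List.mem_cons, List.not_mem_nil, or_false] at hF
          rcases hF with rfl | rfl
          · right; left; rfl
          · right; right; rfl) rfl
end

section
/- If a and b are distinct constants and f is a unary function symbol, then the sequent a=b ⇒ f(a)=f(b) has no cut-free derivation in the calculus whose only equality rules are the left rules =₁ˡ and =₂ˡ (together with logical and reflexivity axioms and weak structural rules), even though it is derivable with the right rules =₁ or =₂. -/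
def GoodT (a b : Nat) (t : Tm) : Prop := t = .const a ∨ t = .const b

def Good (a b : Nat) (F : Fml) : Prop :=
  ∃ t u, GoodT a b t ∧ GoodT a b u ∧ F = .eq t u

lemma substGoodT {a b v : Nat} {s r t : Tm} (hr : GoodT a b r)
    (h : GoodT a b (Tm.subst v s t)) : GoodT a b (Tm.subst v r t) := by
  cases t with
  | var w =>
    by_cases hw : w = v
    · simpa [Tm.subst, hw] using hr
    · simp [Tm.subst, hw, GoodT] at h
  | const c => simpa [Tm.subst] using h
  | app g u => simp [Tm.subst, GoodT] at h

lemma substGood {a b v : Nat} {s r : Tm} {F : Fml} (hr : GoodT a b r)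
    (h : Good a b (F.subst v s)) : Good a b (F.subst v r) := by
  obtain ⟨t, u, ht, hu, he⟩ := h
  cases F <;> simp [Fml.subst] at he
  case eq t' u' =>
    obtain ⟨h1, h2⟩ := he
    exact ⟨_, _, substGoodT hr (h1 ▸ ht), substGoodT hr (h2 ▸ hu), rfl⟩

lemma key {a b : Nat} {Γ : List Fml} {H : Fml}
    (d : Der (allow [.l1, .l2]) false Γ H)
    (hΓ : ∀ F ∈ Γ, Good a b F) :
    Good a b H ∨ ∃ t, H = .eq t t := by
  induction d with
  | ax F => exact Or.inl (hΓ F (by simp))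
  | refl t => exact Or.inr ⟨t, rfl⟩
  | wk F _ ih => exact ih fun G hG => hΓ G (by simp [hG])
  | exch _ ih =>
    apply ih
    intro G hG
    apply hΓ
    simp only [List.mem_append, List.mem_cons] at hG ⊢
    tauto
  | contr _ ih =>
    apply ih
    intro G hG
    apply hΓ
    simp only [List.mem_cons] at hG ⊢
    tauto
  | cutr hc => exact absurd hc (by simp)
  | eq1 hok => simp [allow] at hok
  | eq2 hok => simp [allow] at hok
  | cng hok => simp [allow] at hok
  | eq1l hok prem ih =>
    rename_i Γ' F' v' r' s' H'
    apply ih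
    intro G hG
    have hrs : Good a b (.eq r' s') := hΓ _ (by simp)
    obtain ⟨t, u, ht, hu, he⟩ := hrs
    injection he with h1 h2
    subst h1; subst h2
    simp only [List.mem_cons] at hG
    rcases hG with rfl | hG
    · exact substGood (s := s') ht (hΓ _ (by simp))
    · exact hΓ G (by simp [hG])
  | eq2l hok prem ih =>
    rename_i Γ' F' v' r' s' H'
    apply ih
    intro G hG
    have hrs : Good a b (.eq s' r') := hΓ _ (by simp)
    obtain ⟨t, u, ht, hu, he⟩ := hrs
    injection he with h1 h2
    subst h1; subst h2
    simp only [List.mem_cons] at hG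
    rcases hG with rfl | hG
    · exact substGood (s := s') hu (hΓ _ (by simp))
    · exact hΓ G (by simp [hG])

/-- For distinct constants `a`, `b` and a unary function symbol `f`, the
sequent `a=b ⇒ f(a)=f(b)` is cut-free derivable with the right rule `=₁`, but
has no cut-free derivation in the calculus whose only equality rules are the
left rules `=₁ˡ` and `=₂ˡ`. -/
theorem no_cutfree_derivation_left_rules_only (a b f : Nat) (hab : a ≠ b) :
    Der (allow [.r1]) false [.eq (.const a) (.const b)]
        (.eq (.app f (.const a)) (.app f (.const b))) ∧
    ¬ Der (allow [.l1, .l2]) false [.eq (.const a) (.const b)]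
        (.eq (.app f (.const a)) (.app f (.const b))) := by
  constructor
  · have h := Der.eq1 (ok := allow [.r1]) (cut := false) (Γ := [])
      (F := Fml.eq (.app f (.const a)) (.app f (.var 0)))
      (v := 0) (r := .const a) (s := .const b)
      (by simp [allow]) (by simpa [Fml.subst, Tm.subst] using Der.refl (.app f (.const a)))
    simpa [Fml.subst, Tm.subst] using h
  · intro d
    have h := key (a := a) (b := b) d ?_
    · rcases h with ⟨t, u, ht, hu, he⟩ | ⟨t, he⟩
      · rcases ht with rfl | rfl <;> simp at he
      · simp at he
        obtain ⟨h1, h2⟩ := he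
        rw [← h2] at h1
        exact hab (by simpa using h1)
    · intro F hF
      simp at hF
      exact ⟨_, _, Or.inl rfl, Or.inr rfl, hF⟩
end
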